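/- arXiv:2501.12277 — 2 statements merged into one kernel-verified Lean document; each statement's English description precedes it below -/
import Mathlib

section
/- Let g : [0, δ) → ℝ be C² with g(0) = v₀ ≥ 0, g'(0) = 0, g'' = 2 cosh(2g) on [0, δ), and suppose g(x) → +∞ as x → δ⁻. Then ∫₀^δ e^{g(x)} dx = +∞. -/
/-! Multiplying `g'' = 2 cosh (2g)` by `g'` gives the first integral
`g'² - 2 sinh (2g) = -2 sinh (2v₀) ≤ 0`, hence `g' ≤ |g'| ≤ eᵍ`. Integrating this bound,
`∫₀ʸ eᵍ ≥ g y - v₀`, which tends to `+∞` as `y → δ⁻`. -/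

open MeasureTheory Set Filter Topology Real

theorem lintegral_Ioo_ofReal_eq_top_of_tendsto_atTop {f F : ℝ → ℝ} {a b : ℝ} (hab : a < b)
    (hf : ∀ x ∈ Ioo a b, 0 ≤ f x) (hF : ∀ y ∈ Ioo a b, F y ≤ ∫ x in a..y, f x)
    (hFtop : Tendsto F (𝓝[<] b) atTop) :
    ∫⁻ x in Ioo a b, ENNReal.ofReal (f x) = ⊤ := by
  have hle : ∀ y ∈ Ioo a b, ENNReal.ofReal (F y) ≤ ∫⁻ x in Ioo a b, ENNReal.ofReal (f x) := by
    intro y hy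
    have hsub : Ioc a y ⊆ Ioo a b := Ioc_subset_Ioo_right hy.2
    calc ENNReal.ofReal (F y)
        ≤ ‖∫ x in Ioc a y, f x‖ₑ := by
          rw [← intervalIntegral.integral_of_le hy.1.le]
          exact (ENNReal.ofReal_le_ofReal (hF y hy)).trans (Real.ofReal_le_enorm _)
      _ ≤ ∫⁻ x in Ioc a y, ‖f x‖ₑ := enorm_integral_le_lintegral_enorm _
      _ = ∫⁻ x in Ioc a y, ENNReal.ofReal (f x) :=
          setLIntegral_congr_fun measurableSet_Ioc fun x hx ↦ Real.enorm_eq_ofReal (hf x (hsub hx))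
      _ ≤ _ := lintegral_mono_set hsub
  refine top_le_iff.mp (le_of_tendsto (ENNReal.tendsto_ofReal_atTop.comp hFtop) ?_)
  filter_upwards [Ioo_mem_nhdsLT hab] with y hy using hle y hy

theorem sq_sub_two_mul_comp_eq_of_hasDerivWithinAt {a b : ℝ} {g g' Φ φ : ℝ → ℝ}
    (hΦ : ∀ u, HasDerivAt Φ (φ u) u)
    (hg : ∀ x ∈ Ico a b, HasDerivWithinAt g (g' x) (Ico a b) x)
    (hg' : ∀ x ∈ Ico a b, HasDerivWithinAt g' (φ (g x)) (Ico a b) x) :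
    ∀ x ∈ Ico a b, g' x ^ 2 - 2 * Φ (g x) = g' a ^ 2 - 2 * Φ (g a) := by
  set E : ℝ → ℝ := fun x ↦ g' x ^ 2 - 2 * Φ (g x)
  have hE : ∀ x ∈ Ico a b, HasDerivWithinAt E 0 (Ico a b) x := by
    intro x hx
    refine (((hg' x hx).fun_pow 2).fun_sub
      (((hΦ (g x)).comp_hasDerivWithinAt x (hg x hx)).const_mul 2)).congr_deriv ?_
    norm_num
    ring
  intro x hx
  refine constant_of_has_deriv_right_zero (f := E) (fun y hy ↦ ?_) (fun y hy ↦ ?_) x ⟨hx.1, le_rfl⟩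
  · exact ((hE y ⟨hy.1, hy.2.trans_lt hx.2⟩).continuousWithinAt).mono
      (Icc_subset_Ico_right hx.2)
  · exact (hE y ⟨hy.1, hy.2.trans hx.2⟩).mono_of_mem_nhdsWithin
      (Ico_mem_nhdsGE_of_mem ⟨hy.1, hy.2.trans hx.2⟩)

theorem two_mul_sinh_two_mul_le_exp_sq (t : ℝ) : 2 * sinh (2 * t) ≤ exp t ^ 2 := by
  rw [sinh_eq, ← exp_nat_mul]
  push_cast
  linarith [exp_pos (-(2 * t))]

theorem sub_le_integral_of_hasDerivWithinAt_Ico {a b y : ℝ} {g g' φ : ℝ → ℝ}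
    (hg : ∀ x ∈ Ico a b, HasDerivWithinAt g (g' x) (Ico a b) x) (hφ : ContinuousOn φ (Ico a b))
    (hle : ∀ x ∈ Ico a b, g' x ≤ φ x) (hy : y ∈ Ico a b) :
    g y - g a ≤ ∫ x in a..y, φ x := by
  have hsub : Icc a y ⊆ Ico a b := Icc_subset_Ico_right hy.2
  refine intervalIntegral.sub_le_integral_of_hasDeriv_right_of_le hy.1
    (fun x hx ↦ (hg x (hsub hx)).continuousWithinAt.mono hsub) (fun x hx ↦ ?_)
    ((hφ.mono hsub).integrableOn_Icc) (fun x hx ↦ hle x (hsub (Ioo_subset_Icc_self hx)))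
  exact ((hg x (hsub (Ioo_subset_Icc_self hx))).hasDerivAt
    (Ico_mem_nhds hx.1 (hx.2.trans hy.2))).hasDerivWithinAt

theorem stmt_7 (δ v₀ : ℝ) (g g' : ℝ → ℝ) (hv₀ : 0 ≤ v₀) (hδ : 0 < δ)
    (hg : ∀ x ∈ Set.Ico (0:ℝ) δ, HasDerivWithinAt g (g' x) (Set.Ico 0 δ) x)
    (hg' : ∀ x ∈ Set.Ico (0:ℝ) δ,
      HasDerivWithinAt g' (2 * Real.cosh (2 * g x)) (Set.Ico 0 δ) x)
    (h0 : g 0 = v₀) (h0' : g' 0 = 0)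
    (hblow : Filter.Tendsto g (nhdsWithin δ (Set.Iio δ)) Filter.atTop) :
    ∫⁻ x in Set.Ioo (0:ℝ) δ, ENNReal.ofReal (Real.exp (g x)) ∂volume = ⊤ := by
  have hsinh : ∀ u, HasDerivAt (fun u ↦ sinh (2 * u)) (2 * cosh (2 * u)) u := fun u ↦ by
    simpa [mul_comm] using ((hasDerivAt_id u).const_mul 2).sinh
  have hderiv_le : ∀ x ∈ Ico 0 δ, g' x ≤ exp (g x) := by
    intro x hx
    have henergy := sq_sub_two_mul_comp_eq_of_hasDerivWithinAt hsinh hg hg' x hx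
    rw [h0, h0'] at henergy
    have hsq : g' x ^ 2 ≤ exp (g x) ^ 2 := by
      nlinarith [sinh_nonneg_iff.mpr (by positivity : 0 ≤ 2 * v₀),
        two_mul_sinh_two_mul_le_exp_sq (g x)]
    exact (le_abs_self _).trans (abs_le_of_sq_le_sq hsq (exp_pos _).le)
  have hexp_cont : ContinuousOn (fun x ↦ exp (g x)) (Ico 0 δ) :=
    continuous_exp.comp_continuousOn fun x hx ↦ (hg x hx).continuousWithinAt
  refine lintegral_Ioo_ofReal_eq_top_of_tendsto_atTop hδ (fun x _ ↦ (exp_pos _).le)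
    (F := fun y ↦ g y - v₀) (fun y hy ↦ ?_) (tendsto_atTop_add_const_right _ _ hblow)
  rw [← h0]
  exact sub_le_integral_of_hasDerivWithinAt_Ico hg hexp_cont hderiv_le (Ioo_subset_Ico_self hy)
end

section
/- Let g : [0, δ) → ℝ be a maximal C² solution of g'' = 2 cosh(2g) with g(0) = v₀ ≥ 0, g'(0) = 0, where δ < ∞ is the maximal existence time. Then g(x) → +∞ as x → δ⁻. -/
/-!
Since `g'' > 0` and `g'(0) = 0`, `g` is nondecreasing on `[0, δ)`, so it either tends to `+∞` at `δ`
or to a finite limit `L`. In the second case the first integral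
`g'² = 2 sinh (2g) - 2 sinh (2g(0))` makes `g' = √(2 sinh (2g) - 2 sinh (2g(0)))` converge too, so
the first-order system for `(g, g')` has a limit at `δ`; a Picard–Lindelöf solution started there
extends the solution past `δ`, contradicting maximality.
-/

open Set Filter Real Topology

lemma MonotoneOn.tendsto_nhdsLT_atTop_or_exists_tendsto {f : ℝ → ℝ} {a b : ℝ} (hab : a < b)
    (hf : MonotoneOn f (Ico a b)) :
    Tendsto f (𝓝[<] b) atTop ∨ ∃ L, Tendsto f (𝓝[<] b) (𝓝 L) := by
  by_cases hbdd : BddAbove (f '' Ico a b)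
  · -- `f ∘ max a` is monotone on all of `Iio b`, which is what `MonotoneOn.tendsto_nhdsLT` needs
    have hmax : MonotoneOn (fun x => f (max x a)) (Iio b) := fun x hx y hy hxy =>
      hf ⟨le_max_right _ _, max_lt hx hab⟩ ⟨le_max_right _ _, max_lt hy hab⟩
        (max_le_max_right a hxy)
    have hmax_bdd : BddAbove ((fun x => f (max x a)) '' Iio b) := hbdd.mono <| by
      rintro _ ⟨x, hx, rfl⟩
      exact ⟨max x a, ⟨le_max_right _ _, max_lt hx hab⟩, rfl⟩
    refine .inr ⟨_, (hmax.tendsto_nhdsLT hmax_bdd).congr' ?_⟩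
    filter_upwards [Ioo_mem_nhdsLT hab] with x hx using by rw [max_eq_left hx.1.le]
  · refine .inl (tendsto_atTop.2 fun M => ?_)
    obtain ⟨_, ⟨x, hx, rfl⟩, hMx⟩ := not_bddAbove_iff.1 hbdd M
    filter_upwards [Ioo_mem_nhdsLT hx.2] with y hy
    exact hMx.le.trans (hf hx ⟨hx.1.trans hy.1.le, hy.2⟩ hy.1.le)

lemma monotoneOn_Ico_of_hasDerivWithinAt_nonneg {f f' : ℝ → ℝ} {a b : ℝ}
    (hf : ∀ x ∈ Ico a b, HasDerivWithinAt f (f' x) (Ico a b) x)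
    (hf' : ∀ x ∈ Ico a b, 0 ≤ f' x) : MonotoneOn f (Ico a b) := by
  refine monotoneOn_of_hasDerivWithinAt_nonneg (f' := f') (convex_Ico a b)
    (fun x hx => (hf x hx).continuousWithinAt) (fun x hx => ?_) (fun x hx => ?_)
  · rw [interior_Ico] at hx ⊢
    exact (hf x (Ioo_subset_Ico_self hx)).mono Ioo_subset_Ico_self
  · rw [interior_Ico] at hx
    exact hf' x (Ioo_subset_Ico_self hx)

/-- Conservation of energy for `u'' = Φ'(u)`. -/
lemma sq_deriv_sub_two_mul_eq_of_hasDerivWithinAt {Φ φ u u' : ℝ → ℝ} {a b x : ℝ}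
    (hΦ : ∀ y, HasDerivAt Φ (φ y) y)
    (hu : ∀ x ∈ Ico a b, HasDerivWithinAt u (u' x) (Ico a b) x)
    (hu' : ∀ x ∈ Ico a b, HasDerivWithinAt u' (φ (u x)) (Ico a b) x) (hx : x ∈ Ico a b) :
    u' x ^ 2 - 2 * Φ (u x) = u' a ^ 2 - 2 * Φ (u a) := by
  set E : ℝ → ℝ := fun x => u' x ^ 2 - 2 * Φ (u x)
  have hE : ∀ y ∈ Ico a b, HasDerivWithinAt E 0 (Ico a b) y := fun y hy => by
    refine (((hu' y hy).fun_pow 2).fun_sub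
      (((hΦ (u y)).comp_hasDerivWithinAt y (hu y hy)).const_mul 2)).congr_deriv ?_
    norm_num
    ring
  refine constant_of_has_deriv_right_zero (fun y hy => (hE y ?_).continuousWithinAt.mono ?_)
    (fun y hy => (hE y ?_).mono_of_mem_nhdsWithin ?_) x ⟨hx.1, le_rfl⟩
  · exact ⟨hy.1, hy.2.trans_lt hx.2⟩
  · exact Icc_subset_Ico_right hx.2
  · exact ⟨hy.1, hy.2.trans hx.2⟩
  · exact mem_of_superset (Ico_mem_nhdsGE (hy.2.trans hx.2)) (Ico_subset_Ico_left hy.1)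

section Extension

variable {E : Type*} [NormedAddCommGroup E] [NormedSpace ℝ E] {v : E → E} {u w : ℝ → E} {a b : ℝ}
  {p : E}

lemma hasDerivWithinAt_Iic_of_tendsto_of_eqOn (hv : ContinuousAt v p) (hab : a < b)
    (hu : ∀ x ∈ Ico a b, HasDerivWithinAt u (v (u x)) (Ico a b) x)
    (hlim : Tendsto u (𝓝[<] b) (𝓝 p)) (hwu : EqOn w u (Ico a b)) (hwb : w b = p) :
    HasDerivWithinAt w (v p) (Iic b) b := by
  have hw : ∀ x ∈ Ioo a b, HasDerivAt w (v (u x)) x := fun x hx =>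
    ((hu x (Ioo_subset_Ico_self hx)).hasDerivAt (Ico_mem_nhds hx.1 hx.2)).congr_of_eventuallyEq
      (eventuallyEq_of_mem (Ico_mem_nhds hx.1 hx.2) hwu)
  have hwu' : w =ᶠ[𝓝[Ioo a b] b] u :=
    eventuallyEq_of_mem self_mem_nhdsWithin fun x hx => hwu (Ioo_subset_Ico_self hx)
  refine hasDerivWithinAt_Iic_of_tendsto_deriv
    (fun x hx => (hw x hx).differentiableAt.differentiableWithinAt) ?_ (Ioo_mem_nhdsLT hab) ?_
  · rw [ContinuousWithinAt, hwb]
    exact (hlim.mono_left (nhdsWithin_mono b Ioo_subset_Iio_self)).congr' hwu'.symm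
  · refine ((hv.tendsto).comp hlim).congr' ?_
    filter_upwards [Ioo_mem_nhdsLT hab] with x hx using (hw x hx).deriv.symm

/-- Glue a local Picard–Lindelöf solution started at the limit point. -/
lemma exists_extension_of_tendsto [CompleteSpace E] (hv : ContDiffAt ℝ 1 v p) (hab : a < b)
    (hu : ∀ x ∈ Ico a b, HasDerivWithinAt u (v (u x)) (Ico a b) x)
    (hlim : Tendsto u (𝓝[<] b) (𝓝 p)) :
    ∃ b' > b, ∃ w : ℝ → E,
      (∀ x ∈ Ico a b', HasDerivWithinAt w (v (w x)) (Ico a b') x) ∧ EqOn w u (Ico a b) := by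
  obtain ⟨α, hαb, ε, hε, hα⟩ :=
    hv.exists_forall_mem_closedBall_exists_eq_forall_mem_Ioo_hasDerivAt₀ b
  set w : ℝ → E := fun x => if x < b then u x else α x
  have hwu : EqOn w u (Iio b) := fun x hx => if_pos hx
  have hwα : EqOn w α (Ici b) := fun x hx => if_neg (not_lt.2 hx)
  refine ⟨b + ε, by linarith, w, fun x hx => ?_, fun x hx => hwu hx.2⟩
  rcases lt_trichotomy x b with hxb | rfl | hbx
  · have hmem : Ico a b ∈ 𝓝[Ico a (b + ε)] x :=
      mem_nhdsWithin.2 ⟨Iio b, isOpen_Iio, hxb, fun z hz => ⟨hz.2.1, hz.1⟩⟩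
    rw [hwu hxb]
    exact ((hu x ⟨hx.1, hxb⟩).mono_of_mem_nhdsWithin hmem).congr_of_eventuallyEq
      (eventuallyEq_of_mem (mem_nhdsWithin_of_mem_nhds (Iio_mem_nhds hxb)) hwu) (hwu hxb)
  · have hx' : x ∈ Ioo (x - ε) (x + ε) := ⟨by linarith, by linarith⟩
    have hwx : w x = p := (hwα self_mem_Ici).trans hαb
    have hleft := hasDerivWithinAt_Iic_of_tendsto_of_eqOn hv.continuousAt hab hu hlim
      (fun y hy => hwu hy.2) hwx
    have hright : HasDerivWithinAt w (v p) (Ici x) x :=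
      hαb ▸ (hα x hx').hasDerivWithinAt.congr hwα (hwα self_mem_Ici)
    rw [hwx]
    exact (hleft.union hright).mono (by rw [Iic_union_Ici]; exact subset_univ _)
  · have hx' : x ∈ Ioo (b - ε) (b + ε) := ⟨by linarith, hx.2⟩
    rw [hwα hbx.le]
    exact (hα x hx').hasDerivWithinAt.congr_of_eventuallyEq
      (eventuallyEq_of_mem (mem_nhdsWithin_of_mem_nhds (Ici_mem_nhds hbx)) hwα) (hwα hbx.le)

end Extension

theorem stmt_8_general (δ : ℝ) (g g' : ℝ → ℝ) (hδ : 0 < δ)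
    (hg : ∀ x ∈ Set.Ico (0:ℝ) δ, HasDerivWithinAt g (g' x) (Set.Ico 0 δ) x)
    (hg' : ∀ x ∈ Set.Ico (0:ℝ) δ,
      HasDerivWithinAt g' (2 * Real.cosh (2 * g x)) (Set.Ico 0 δ) x)
    (h0' : g' 0 = 0)
    (hmax : ∀ δ' > δ, ¬ ∃ h h' : ℝ → ℝ,
      (∀ x ∈ Set.Ico (0:ℝ) δ', HasDerivWithinAt h (h' x) (Set.Ico 0 δ') x ∧
        HasDerivWithinAt h' (2 * Real.cosh (2 * h x)) (Set.Ico 0 δ') x) ∧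
      (∀ x ∈ Set.Ico (0:ℝ) δ, h x = g x)) :
    Filter.Tendsto g (nhdsWithin δ (Set.Iio δ)) Filter.atTop := by
  have hg'_mono : MonotoneOn g' (Ico 0 δ) :=
    monotoneOn_Ico_of_hasDerivWithinAt_nonneg hg' fun x _ => by positivity
  have hg'_nonneg : ∀ x ∈ Ico 0 δ, 0 ≤ g' x := fun x hx =>
    h0' ▸ hg'_mono (left_mem_Ico.2 hδ) hx hx.1
  obtain hg_top | ⟨L, hgL⟩ := (monotoneOn_Ico_of_hasDerivWithinAt_nonneg hg hg'_nonneg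
    ).tendsto_nhdsLT_atTop_or_exists_tendsto hδ
  · exact hg_top
  exfalso
  set G : ℝ → ℝ := fun y => √(2 * sinh (2 * y) - 2 * sinh (2 * g 0))
  have hg'_eq : ∀ x ∈ Ico 0 δ, g' x = G (g x) := fun x hx => by
    have henergy := sq_deriv_sub_two_mul_eq_of_hasDerivWithinAt (Φ := fun y => sinh (2 * y))
      (φ := fun y => 2 * cosh (2 * y))
      (fun y => ((hasDerivAt_id y).const_mul 2).sinh.congr_deriv (by simp only [id]; ring))
      hg hg' hx
    rw [← sqrt_sq (hg'_nonneg x hx)]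
    congr 1
    linarith [h0' ▸ henergy]
  have hG : Continuous G := by fun_prop
  have hg'L : Tendsto g' (𝓝[<] δ) (𝓝 (G L)) := ((hG.tendsto L).comp hgL).congr' <|
    eventuallyEq_of_mem (Ioo_mem_nhdsLT hδ) fun x hx => (hg'_eq x (Ioo_subset_Ico_self hx)).symm
  obtain ⟨δ', hδ', w, hw, hwg⟩ := exists_extension_of_tendsto
    (v := fun p : ℝ × ℝ => (p.2, 2 * cosh (2 * p.1))) (by fun_prop) hδ
    (fun x hx => (hg x hx).prodMk (hg' x hx)) (hgL.prodMk_nhds hg'L)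
  exact hmax δ' hδ' ⟨fun x => (w x).1, fun x => (w x).2, fun x hx =>
    ⟨(hasFDerivAt_fst (p := w x)).comp_hasDerivWithinAt x (hw x hx),
      (hasFDerivAt_snd (p := w x)).comp_hasDerivWithinAt x (hw x hx)⟩,
    fun x hx => congrArg Prod.fst (hwg hx)⟩

theorem stmt_8 (δ v₀ : ℝ) (g g' : ℝ → ℝ) (hv₀ : 0 ≤ v₀) (hδ : 0 < δ)
    (hg : ∀ x ∈ Set.Ico (0:ℝ) δ, HasDerivWithinAt g (g' x) (Set.Ico 0 δ) x)
    (hg' : ∀ x ∈ Set.Ico (0:ℝ) δ,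
      HasDerivWithinAt g' (2 * Real.cosh (2 * g x)) (Set.Ico 0 δ) x)
    (h0 : g 0 = v₀) (h0' : g' 0 = 0)
    (hmax : ∀ δ' > δ, ¬ ∃ h h' : ℝ → ℝ,
      (∀ x ∈ Set.Ico (0:ℝ) δ', HasDerivWithinAt h (h' x) (Set.Ico 0 δ') x ∧
        HasDerivWithinAt h' (2 * Real.cosh (2 * h x)) (Set.Ico 0 δ') x) ∧
      (∀ x ∈ Set.Ico (0:ℝ) δ, h x = g x)) :
    Filter.Tendsto g (nhdsWithin δ (Set.Iio δ)) Filter.atTop :=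
  stmt_8_general δ g g' hδ hg hg' h0' hmax
end
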